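/- arXiv:1608.02595 — 2 statements merged into one kernel-verified Lean document; each statement's English description precedes it below -/
import Mathlib

section
/- Let p be an odd prime and let T ≠ T' be two distinct elements of Σ₃(p). If exactly one of T, T' is even and the other is odd, then dim(T ∩ T') = 2. If both are even or both are odd, then dim(T ∩ T') = 1. -/
/-- The 6-dimensional phase space `V₆ = (Fin 3 → ZMod p) × (Fin 3 → ZMod p)`. -/
abbrev V6 (p : ℕ) := (Fin 3 → ZMod p) × (Fin 3 → ZMod p)

/-- Dot product on `Fin 3 → ZMod p`. -/
def dotP {p : ℕ} (x y : Fin 3 → ZMod p) : ZMod p := ∑ i, x i * y i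

/-- The bilinear form `β((x⃗,y⃗),(x⃗',y⃗')) = x⃗·x⃗' − y⃗·y⃗'`. -/
def betaF {p : ℕ} (v w : V6 p) : ZMod p := dotP v.1 w.1 - dotP v.2 w.2

/-- The all-ones vector `𝟙₆`. -/
def onesV (p : ℕ) : V6 p := (fun _ => 1, fun _ => 1)

/-- `Σ₃(p)`: the set of Lagrangian stochastic subspaces of `V₆`. -/
def Sigma3 (p : ℕ) : Set (Submodule (ZMod p) (V6 p)) :=
  {T | Module.finrank (ZMod p) T = 3 ∧ (∀ v ∈ T, ∀ w ∈ T, betaF v w = 0) ∧ onesV p ∈ T}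

/-- The even elements of `Σ₃(p)`: `T_{⋆,even}` and `T_{m,even}` for `m ∈ ZMod p`. -/
def IsEvenT (p : ℕ) (T : Submodule (ZMod p) (V6 p)) : Prop :=
  T = Submodule.span (ZMod p)
      {(![1,1,1], ![1,1,1]), (![1,0,0], ![1,0,0]), (![0,1,0], ![0,1,0])} ∨
  ∃ m : ZMod p, T = Submodule.span (ZMod p)
      {(![1,1,1], ![1,1,1]), (![-1,m,1], ![1,m,-1]), (![m,1,-1], ![m,-1,1])}

/-- The odd elements of `Σ₃(p)`: `T_{⋆,odd}` and `T_{m,odd}` for `m ∈ ZMod p`. -/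
def IsOddT (p : ℕ) (T : Submodule (ZMod p) (V6 p)) : Prop :=
  T = Submodule.span (ZMod p)
      {(![1,1,1], ![1,1,1]), (![-1,0,1], ![1,0,-1]), (![0,1,0], ![0,1,0])} ∨
  ∃ m : ZMod p, T = Submodule.span (ZMod p)
      {(![1,1,1], ![1,1,1]), (![1,m,0], ![1,m,0]), (![-m,1,m-1], ![m,-1,1-m])}

/-!
Every element of `Σ₃(p)` contains `𝟙₆`, so `T ∩ T'` has dimension at least `1`, and two distinct
`3`-dimensional subspaces meet in dimension at most `2`. The rest is explicit linear algebra on the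
listed spanning sets: an even and an odd subspace always share a vector that is not a multiple of
`𝟙₆`, whereas for two subspaces of the same parity, writing a common vector in both spanning sets
and comparing the six coordinates forces it onto the line through `𝟙₆` (this is where `2 ≠ 0` is
needed).
-/

open Module Submodule

theorem span_triple_inf_le_span_singleton {R M : Type*} [Semiring R] [AddCommMonoid M]
    [Module R M] {e a b a' b' : M}
    (h : ∀ α β γ α' β' γ' : R,
      α • e + β • a + γ • b = α' • e + β' • a' + γ' • b' → β' = 0 ∧ γ' = 0) :
    span R {e, a, b} ⊓ span R {e, a', b'} ≤ span R {e} := by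
  rintro v ⟨hv, hv'⟩
  obtain ⟨α, β, γ, rfl⟩ := mem_span_triple.1 hv
  obtain ⟨α', β', γ', hv'⟩ := mem_span_triple.1 hv'
  obtain ⟨rfl, rfl⟩ := h α β γ α' β' γ' hv'.symm
  exact mem_span_singleton.2 ⟨α', by simp [← hv']⟩

theorem finrank_inf_lt_of_ne {K V : Type*} [DivisionRing K] [AddCommGroup V] [Module K V]
    [FiniteDimensional K V] {T T' : Submodule K V}
    (h : finrank K T = finrank K T') (hne : T ≠ T') : finrank K ↥(T ⊓ T') < finrank K T :=
  finrank_lt_finrank_of_lt <| inf_le_left.lt_of_ne fun hT =>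
    hne (eq_of_le_of_finrank_eq (inf_eq_left.1 hT) h)

section Sigma3

variable {p : ℕ}

theorem V6.ext_iff_coords {v w : V6 p} :
    v = w ↔ (v.1 0 = w.1 0 ∧ v.1 1 = w.1 1 ∧ v.1 2 = w.1 2) ∧
      (v.2 0 = w.2 0 ∧ v.2 1 = w.2 1 ∧ v.2 2 = w.2 2) := by
  simp [Prod.ext_iff, funext_iff, Fin.forall_fin_succ]

theorem onesV_eq : onesV p = (![1, 1, 1], ![1, 1, 1]) := by
  ext i <;> fin_cases i <;> rfl

theorem coords_eq_of_mem_span_onesV {w : V6 p} (hw : w ∈ span (ZMod p) {onesV p})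
    (i j : Fin 3) : w.1 i = w.1 j ∧ w.1 i = w.2 j := by
  obtain ⟨c, rfl⟩ := mem_span_singleton.1 hw
  simp [onesV]

def tEvenStar (p : ℕ) : Submodule (ZMod p) (V6 p) :=
  span (ZMod p) {onesV p, (![1, 0, 0], ![1, 0, 0]), (![0, 1, 0], ![0, 1, 0])}

def tEven (m : ZMod p) : Submodule (ZMod p) (V6 p) :=
  span (ZMod p) {onesV p, (![-1, m, 1], ![1, m, -1]), (![m, 1, -1], ![m, -1, 1])}

def tOddStar (p : ℕ) : Submodule (ZMod p) (V6 p) :=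
  span (ZMod p) {onesV p, (![-1, 0, 1], ![1, 0, -1]), (![0, 1, 0], ![0, 1, 0])}

def tOdd (m : ZMod p) : Submodule (ZMod p) (V6 p) :=
  span (ZMod p) {onesV p, (![1, m, 0], ![1, m, 0]), (![-m, 1, m - 1], ![m, -1, 1 - m])}

theorem isEvenT_iff {T : Submodule (ZMod p) (V6 p)} :
    IsEvenT p T ↔ T = tEvenStar p ∨ ∃ m, T = tEven m := by
  rw [IsEvenT, ← onesV_eq]; rfl

theorem isOddT_iff {T : Submodule (ZMod p) (V6 p)} :
    IsOddT p T ↔ T = tOddStar p ∨ ∃ m, T = tOdd m := by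
  rw [IsOddT, ← onesV_eq]; rfl

variable [Fact p.Prime]

theorem onesV_ne_zero : onesV p ≠ 0 := fun h => one_ne_zero (congrFun (congrArg Prod.fst h) 0)

theorem tEvenStar_inf_tEven_le (h2 : (2 : ZMod p) ≠ 0) (n : ZMod p) :
    tEvenStar p ⊓ tEven n ≤ span (ZMod p) {onesV p} := by
  refine span_triple_inf_le_span_singleton fun α β γ α' β' γ' h => ?_
  simp only [V6.ext_iff_coords, onesV, Prod.fst_add, Prod.snd_add, Prod.smul_fst, Prod.smul_snd,
    Pi.add_apply, Pi.smul_apply, smul_eq_mul, Matrix.cons_val] at h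
  obtain ⟨⟨x0, x1, x2⟩, y0, y1, y2⟩ := h
  exact ⟨mul_left_cancel₀ h2 (by linear_combination x0 - y0),
    mul_left_cancel₀ h2 (by linear_combination y1 - x1)⟩

theorem tEven_inf_tEven_le (h2 : (2 : ZMod p) ≠ 0) {m n : ZMod p} (hmn : m ≠ n) :
    tEven m ⊓ tEven n ≤ span (ZMod p) {onesV p} := by
  refine span_triple_inf_le_span_singleton fun α β γ α' β' γ' h => ?_
  simp only [V6.ext_iff_coords, onesV, Prod.fst_add, Prod.snd_add, Prod.smul_fst, Prod.smul_snd,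
    Pi.add_apply, Pi.smul_apply, smul_eq_mul, Matrix.cons_val] at h
  obtain ⟨⟨x0, x1, x2⟩, y0, y1, y2⟩ := h
  have hββ : β = β' := mul_left_cancel₀ h2 (by linear_combination y0 - x0)
  have hγγ : γ = γ' := mul_left_cancel₀ h2 (by linear_combination x1 - y1)
  have hαα : α = α' := mul_left_cancel₀ h2 (by linear_combination x2 + y2)
  have hmn' : m - n ≠ 0 := sub_ne_zero.2 hmn
  refine ⟨mul_left_cancel₀ hmn' ?_, mul_left_cancel₀ hmn' ?_⟩
  · linear_combination x1 - hαα - hγγ - m * hββ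
  · linear_combination x0 - hαα + hββ - m * hγγ

theorem tOddStar_inf_tOdd_le (h2 : (2 : ZMod p) ≠ 0) (n : ZMod p) :
    tOddStar p ⊓ tOdd n ≤ span (ZMod p) {onesV p} := by
  refine span_triple_inf_le_span_singleton fun α β γ α' β' γ' h => ?_
  simp only [V6.ext_iff_coords, onesV, Prod.fst_add, Prod.snd_add, Prod.smul_fst, Prod.smul_snd,
    Pi.add_apply, Pi.smul_apply, smul_eq_mul, Matrix.cons_val] at h
  obtain ⟨⟨x0, x1, x2⟩, y0, y1, y2⟩ := h
  have hγ' : γ' = 0 := mul_left_cancel₀ h2 (by linear_combination y1 - x1)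
  have hβ : β = 0 := mul_left_cancel₀ h2 (by linear_combination y0 - x0 + 2 * n * hγ')
  exact ⟨by linear_combination x2 - x0 - 2 * hβ + (2 * n - 1) * hγ', hγ'⟩

theorem tOdd_inf_tOdd_le (h2 : (2 : ZMod p) ≠ 0) {m n : ZMod p} (hmn : m ≠ n) :
    tOdd m ⊓ tOdd n ≤ span (ZMod p) {onesV p} := by
  refine span_triple_inf_le_span_singleton fun α β γ α' β' γ' h => ?_
  simp only [V6.ext_iff_coords, onesV, Prod.fst_add, Prod.snd_add, Prod.smul_fst, Prod.smul_snd,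
    Pi.add_apply, Pi.smul_apply, smul_eq_mul, Matrix.cons_val] at h
  obtain ⟨⟨x0, x1, x2⟩, y0, y1, y2⟩ := h
  have hmn' : m - n ≠ 0 := sub_ne_zero.2 hmn
  have hγγ : γ = γ' := mul_left_cancel₀ h2 (by linear_combination x1 - y1)
  have hγ' : γ' = 0 := mul_left_cancel₀ (mul_ne_zero h2 hmn')
    (by linear_combination y0 - x0 - 2 * m * hγγ)
  have hαα : α = α' := mul_left_cancel₀ h2 (by linear_combination x2 + y2)
  have hββ : β = β' := by linear_combination x0 - hαα + m * hγγ + (m - n) * hγ'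
  exact ⟨mul_left_cancel₀ hmn' (by linear_combination x1 - hαα - hγγ - m * hββ), hγ'⟩

theorem inf_le_span_onesV_of_isEvenT (h2 : (2 : ZMod p) ≠ 0)
    {T T' : Submodule (ZMod p) (V6 p)}
    (hT : IsEvenT p T) (hT' : IsEvenT p T') (hne : T ≠ T') :
    T ⊓ T' ≤ span (ZMod p) {onesV p} := by
  rcases isEvenT_iff.1 hT with rfl | ⟨m, rfl⟩ <;>
    rcases isEvenT_iff.1 hT' with rfl | ⟨n, rfl⟩
  · exact absurd rfl hne
  · exact tEvenStar_inf_tEven_le h2 n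
  · exact inf_comm (tEvenStar p) _ ▸ tEvenStar_inf_tEven_le h2 m
  · exact tEven_inf_tEven_le h2 fun hmn => hne (hmn ▸ rfl)

theorem inf_le_span_onesV_of_isOddT (h2 : (2 : ZMod p) ≠ 0)
    {T T' : Submodule (ZMod p) (V6 p)}
    (hT : IsOddT p T) (hT' : IsOddT p T') (hne : T ≠ T') :
    T ⊓ T' ≤ span (ZMod p) {onesV p} := by
  rcases isOddT_iff.1 hT with rfl | ⟨m, rfl⟩ <;>
    rcases isOddT_iff.1 hT' with rfl | ⟨n, rfl⟩
  · exact absurd rfl hne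
  · exact tOddStar_inf_tOdd_le h2 n
  · exact inf_comm (tOddStar p) _ ▸ tOddStar_inf_tOdd_le h2 m
  · exact tOdd_inf_tOdd_le h2 fun hmn => hne (hmn ▸ rfl)

theorem exists_mem_inf_not_mem_span_onesV (h2 : (2 : ZMod p) ≠ 0)
    {T T' : Submodule (ZMod p) (V6 p)} (hT : IsEvenT p T) (hT' : IsOddT p T') :
    ∃ w ∈ T ⊓ T', w ∉ span (ZMod p) {onesV p} := by
  rcases isEvenT_iff.1 hT with rfl | ⟨m, rfl⟩ <;>
    rcases isOddT_iff.1 hT' with rfl | ⟨n, rfl⟩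
  · refine ⟨(![0, 1, 0], ![0, 1, 0]),
      ⟨mem_span_triple.2 ⟨0, 0, 1, by simp⟩, mem_span_triple.2 ⟨0, 0, 1, by simp⟩⟩,
      fun hw => ?_⟩
    simpa using (coords_eq_of_mem_span_onesV hw 0 1).1
  · refine ⟨(![1, n, 0], ![1, n, 0]),
      ⟨mem_span_triple.2 ⟨0, 1, n, by simp⟩, mem_span_triple.2 ⟨0, 1, 0, by simp⟩⟩,
      fun hw => ?_⟩
    simpa using (coords_eq_of_mem_span_onesV hw 0 2).1
  · refine ⟨(![-1, m, 1], ![1, m, -1]),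
      ⟨mem_span_triple.2 ⟨0, 1, 0, by simp⟩, mem_span_triple.2 ⟨0, 1, m, by simp⟩⟩,
      fun hw => ?_⟩
    have h : (-1 : ZMod p) = 1 := by simpa using (coords_eq_of_mem_span_onesV hw 0 0).2
    exact h2 (by linear_combination -h)
  · refine ⟨(![m - n, m * n + 1, n - 1], ![m + n, m * n - 1, 1 - n]),
      ⟨mem_span_triple.2 ⟨0, n, 1, by simp [sub_eq_add_neg, mul_comm, add_comm]⟩,
        mem_span_triple.2 ⟨0, m, 1, by simp [sub_eq_add_neg]⟩⟩,
      fun hw => ?_⟩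
    have h : m * n + 1 = m * n - 1 := by simpa using (coords_eq_of_mem_span_onesV hw 1 1).2
    exact h2 (by linear_combination h)

end Sigma3

/-- For an odd prime `p` and distinct `T ≠ T'` in `Σ₃(p)`: if exactly one of them is even
and the other odd, then `dim (T ∩ T') = 2`; if both are even or both are odd, then
`dim (T ∩ T') = 1`. -/
theorem dim_inter_of_ne (p : ℕ) [Fact p.Prime] (hodd : p ≠ 2)
    (T T' : Submodule (ZMod p) (V6 p)) (hT : T ∈ Sigma3 p) (hT' : T' ∈ Sigma3 p)
    (hne : T ≠ T') :
    (((IsEvenT p T ∧ IsOddT p T') ∨ (IsOddT p T ∧ IsEvenT p T')) →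
        Module.finrank (ZMod p) ↥(T ⊓ T') = 2) ∧
    (((IsEvenT p T ∧ IsEvenT p T') ∨ (IsOddT p T ∧ IsOddT p T')) →
        Module.finrank (ZMod p) ↥(T ⊓ T') = 1) := by
  obtain ⟨hrank, -, hones⟩ := hT
  obtain ⟨hrank', -, hones'⟩ := hT'
  have h2 : (2 : ZMod p) ≠ 0 := Ring.two_ne_zero (by rwa [ZMod.ringChar_zmod_n])
  have hle : span (ZMod p) {onesV p} ≤ T ⊓ T' :=
    (span_singleton_le_iff_mem _ _).2 ⟨hones, hones'⟩
  have hone : finrank (ZMod p) (span (ZMod p) {onesV p}) = 1 :=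
    finrank_span_singleton onesV_ne_zero
  refine ⟨fun h => ?_, fun h => ?_⟩
  · obtain ⟨w, hw, hw1⟩ : ∃ w ∈ T ⊓ T', w ∉ span (ZMod p) {onesV p} := by
      rcases h with ⟨hE, hO⟩ | ⟨hO, hE⟩
      · exact exists_mem_inf_not_mem_span_onesV h2 hE hO
      · exact inf_comm T' T ▸ exists_mem_inf_not_mem_span_onesV h2 hE hO
    have hgt := finrank_lt_finrank_of_lt (SetLike.lt_iff_le_and_exists.2 ⟨hle, w, hw, hw1⟩)
    have hlt := finrank_inf_lt_of_ne (hrank.trans hrank'.symm) hne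
    omega
  · have hinf : T ⊓ T' ≤ span (ZMod p) {onesV p} := by
      rcases h with ⟨hE, hE'⟩ | ⟨hO, hO'⟩
      · exact inf_le_span_onesV_of_isEvenT h2 hE hE' hne
      · exact inf_le_span_onesV_of_isOddT h2 hO hO' hne
    rw [le_antisymm hinf hle, hone]
end

section
/- Let (V, E, ends) be a finite multigraph with boundary vertices V_∂ ⊆ V, and let A, B, C ⊆ V_∂ be pairwise disjoint. Then there exist a minimal cut V_A for A, a minimal cut V_B for B, and a minimal cut V_C for C that are pairwise disjoint. -/
/-!
The cut function is posimodular: `|∂(W \ W')| + |∂(W' \ W)| ≤ |∂W| + |∂W'|`. If `W` and `W'`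
are minimal cuts for disjoint `X` and `Y`, then `W \ W'` is still a cut for `X` and `W' \ W`
one for `Y`, so neither term on the left can drop below its counterpart on the right and both
differences are again minimal cuts. Starting from arbitrary minimal cuts for `A`, `B`, `C`,
removing `V_A` from the other two and then `V_B` from the third makes them pairwise disjoint.
-/

open Classical in
/-- The edge boundary `∂W` of a finset of vertices `W` in a finite multigraph given by
`ends : E → V × V`: the edges with exactly one endpoint in `W`. -/
noncomputable def edgeBoundary {V E : Type*} [Fintype V] [Fintype E]
    (ends : E → V × V) (W : Finset V) : Finset E :=
  Finset.univ.filter fun e =>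
    ((ends e).1 ∈ W ∧ (ends e).2 ∉ W) ∨ ((ends e).1 ∉ W ∧ (ends e).2 ∈ W)

/-- `W` is a cut for the boundary subset `X ⊆ V_∂` if `W ∩ V_∂ = X`. -/
def IsCut {V : Type*} [DecidableEq V] (Vbd : Finset V) (X W : Finset V) : Prop :=
  W ∩ Vbd = X

/-- `W` is a minimal cut for `X` if it is a cut for `X` minimizing `|∂W|`. -/
def IsMinCut {V E : Type*} [Fintype V] [Fintype E] [DecidableEq V]
    (ends : E → V × V) (Vbd : Finset V) (X W : Finset V) : Prop :=
  IsCut Vbd X W ∧ ∀ W', IsCut Vbd X W' →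
    (edgeBoundary ends W).card ≤ (edgeBoundary ends W').card

section MinCut

variable {V E : Type*} [Fintype V] [Fintype E] [DecidableEq V]

theorem card_edgeBoundary_sdiff_add_le (ends : E → V × V) (W W' : Finset V) :
    (edgeBoundary ends (W \ W')).card + (edgeBoundary ends (W' \ W)).card ≤
      (edgeBoundary ends W).card + (edgeBoundary ends W').card := by
  simp only [edgeBoundary, Finset.card_filter, ← Finset.sum_add_distrib]
  refine Finset.sum_le_sum fun e _ => ?_
  by_cases h1 : (ends e).1 ∈ W <;> by_cases h2 : (ends e).1 ∈ W' <;>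
    by_cases h3 : (ends e).2 ∈ W <;> by_cases h4 : (ends e).2 ∈ W' <;>
    simp [h1, h2, h3, h4]

theorem exists_isMinCut (ends : E → V × V) {Vbd X : Finset V} (hX : X ⊆ Vbd) :
    ∃ W, IsMinCut ends Vbd X W := by
  classical
  have hcut : (Finset.univ.filter fun W : Finset V => IsCut Vbd X W).Nonempty :=
    ⟨X, Finset.mem_filter.mpr ⟨Finset.mem_univ X, Finset.inter_eq_left.mpr hX⟩⟩
  obtain ⟨W, hW, hmin⟩ := Finset.exists_min_image _ (fun W => (edgeBoundary ends W).card) hcut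
  exact ⟨W, (Finset.mem_filter.mp hW).2,
    fun W' hW' => hmin W' (Finset.mem_filter.mpr ⟨Finset.mem_univ W', hW'⟩)⟩

theorem IsCut.sdiff {Vbd X Y W W' : Finset V} (hW : IsCut Vbd X W) (hW' : IsCut Vbd Y W')
    (hXY : Disjoint X Y) : IsCut Vbd X (W \ W') := by
  simp only [IsCut, ← Finset.inf_eq_inter] at *
  rw [inf_sdiff_distrib_right, hW, hW', hXY.sdiff_eq_left]

theorem IsMinCut.sdiff {ends : E → V × V} {Vbd X Y W W' : Finset V}
    (hW : IsMinCut ends Vbd X W) (hW' : IsMinCut ends Vbd Y W') (hXY : Disjoint X Y) :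
    IsMinCut ends Vbd X (W \ W') := by
  have hcutX : IsCut Vbd X (W \ W') := hW.1.sdiff hW'.1 hXY
  have hgeX := hW.2 _ hcutX
  have hgeY := hW'.2 _ (hW'.1.sdiff hW.1 hXY.symm)
  have hposimod := card_edgeBoundary_sdiff_add_le ends W W'
  refine ⟨hcutX, fun W'' hW'' => ?_⟩
  have hle := hW.2 W'' hW''
  omega

end MinCut

/-- For pairwise disjoint boundary regions `A`, `B`, `C` there exist pairwise disjoint
minimal cuts `V_A`, `V_B`, `V_C`. -/
theorem exists_disjoint_minCuts {V E : Type*} [Fintype V] [Fintype E] [DecidableEq V]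
    (ends : E → V × V) (Vbd : Finset V) (A B C : Finset V)
    (hA : A ⊆ Vbd) (hB : B ⊆ Vbd) (hC : C ⊆ Vbd)
    (hAB : Disjoint A B) (hAC : Disjoint A C) (hBC : Disjoint B C) :
    ∃ VA VB VC : Finset V,
      IsMinCut ends Vbd A VA ∧ IsMinCut ends Vbd B VB ∧ IsMinCut ends Vbd C VC ∧
      Disjoint VA VB ∧ Disjoint VA VC ∧ Disjoint VB VC := by
  obtain ⟨VA, hVA⟩ := exists_isMinCut ends hA
  obtain ⟨VB, hVB⟩ := exists_isMinCut ends hB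
  obtain ⟨VC, hVC⟩ := exists_isMinCut ends hC
  have hVB' := hVB.sdiff hVA hAB.symm
  have hVC' := (hVC.sdiff hVA hAC.symm).sdiff hVB' hBC.symm
  refine ⟨VA, VB \ VA, (VC \ VA) \ (VB \ VA), hVA, hVB', hVC', ?_, ?_, ?_⟩
  · exact disjoint_sdiff_self_right
  · exact disjoint_sdiff_self_right.mono_right sdiff_le
  · exact disjoint_sdiff_self_right
end
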